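/- Let r, s, t ∈ ℝ⁴ be nonzero, set O_{rst} = (M_r·M_s·M_t)/(‖r‖·‖s‖·‖t‖) and N_{rst} = O_{rst} + O_{rst}ᵗ. Then the characteristic polynomial of N_{rst} equals (x² − 4)(x + 2P̄(r,s,t))², where P̄(r,s,t) = P(r,s,t)/(‖r‖·‖s‖·‖t‖); equivalently, the spectrum of N_{rst} is {2, −2, −2P̄(r,s,t)} with −2P̄(r,s,t) of multiplicity two. -/

import Mathlib

noncomputable section

open Real Polynomial

attribute [local instance] Matrix.frobeniusNormedAddCommGroup Matrix.frobeniusNormedSpace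

/-- The quaternion corresponding to a vector in ℝ⁴. -/
def quat (t : EuclideanSpace ℝ (Fin 4)) : Quaternion ℝ := ⟨t 0, t 1, t 2, t 3⟩

/-- P(r,s,t) = Re(qr·qs·qt). -/
def Pq (r s t : EuclideanSpace ℝ (Fin 4)) : ℝ := (quat r * quat s * quat t).re

/-- The 4×4 matrix M_s. -/
def Mmat (s : EuclideanSpace ℝ (Fin 4)) : Matrix (Fin 4) (Fin 4) ℝ :=
  !![s 0, -s 1, -s 2, -s 3;
     -s 1, -s 0, -s 3, s 2;
     -s 2, s 3, -s 0, -s 1;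
     -s 3, -s 2, s 1, -s 0]

/-!
Since `M_s x = conj (x q_s)`, the product `M_r M_s M_t` is the matrix of `x ↦ a x̄ q_s` with
`a = conj (q_t q_r)`. As `a x̄ b + b x̄ a = 2 (⟪a, x⟫ b + ⟪b, x⟫ a - ⟪a, b⟫ x)`, the symmetrization is
`2 (a sᵀ + s aᵀ - ⟪a, s⟫ I)`. The rank-two part `a bᵀ + b aᵀ = [a b] [b a]ᵀ` has, by
`χ(AB) = X^(n-2) χ(BA)`, characteristic polynomial `X^(n-2) ((X - ⟪a, b⟫)² - ‖a‖²‖b‖²)`.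
Finally `‖a‖ = ‖r‖ ‖t‖` because the quaternion norm is multiplicative, and
`⟪a, s⟫ = Re (q_t q_r q_s) = P(r,s,t)`.
-/

open Matrix

section SymmVecMulVec

variable {R n : Type*} [CommRing R] [Fintype n] [DecidableEq n]

theorem Matrix.charpoly_vecMulVec_add_vecMulVec [Nontrivial R] (u v : n → R)
    (hn : 2 ≤ Fintype.card n) :
    (vecMulVec u v + vecMulVec v u).charpoly =
      X ^ (Fintype.card n - 2) * ((X - C (u ⬝ᵥ v)) ^ 2 - C ((u ⬝ᵥ u) * (v ⬝ᵥ v))) := by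
  let A : Matrix n (Fin 2) R := of fun i k => ![u i, v i] k
  let B : Matrix (Fin 2) n R := of fun k j => ![v j, u j] k
  have hAB : A * B = vecMulVec u v + vecMulVec v u := by
    ext i j
    simp [A, B, mul_apply, vecMulVec_apply]
  have hBA : B * A = !![v ⬝ᵥ u, v ⬝ᵥ v; u ⬝ᵥ u, u ⬝ᵥ v] := by
    ext k l
    fin_cases k <;> fin_cases l <;> simp [A, B, mul_apply, dotProduct]
  rw [← hAB, charpoly_mul_comm_of_le A B (by simpa using hn), Fintype.card_fin, hBA,
    charpoly_fin_two, trace_fin_two_of, det_fin_two_of, dotProduct_comm v u]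
  simp only [map_sub, map_add, map_mul]
  ring

def symmVecMulVec (u v : n → R) : Matrix n n R :=
  vecMulVec u v + vecMulVec v u - scalar n (u ⬝ᵥ v)

theorem symmVecMulVec_smul_left (c : R) (u v : n → R) :
    symmVecMulVec (c • u) v = c • symmVecMulVec u v := by
  ext i j
  by_cases h : i = j <;> simp [symmVecMulVec, h, vecMulVec_apply, smul_dotProduct] <;> ring

theorem charpoly_symmVecMulVec [Nontrivial R] (u v : n → R) (hn : 2 ≤ Fintype.card n) :
    (symmVecMulVec u v).charpoly =
      (X + C (u ⬝ᵥ v)) ^ (Fintype.card n - 2) * (X ^ 2 - C ((u ⬝ᵥ u) * (v ⬝ᵥ v))) := by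
  rw [symmVecMulVec, charpoly_sub_scalar, charpoly_vecMulVec_add_vecMulVec u v hn]
  simp only [mul_comp, pow_comp, sub_comp, X_comp, C_comp]
  ring

end SymmVecMulVec

section Quaternion

open Quaternion

theorem norm_quat (t : EuclideanSpace ℝ (Fin 4)) : ‖quat t‖ = ‖t‖ :=
  linearIsometryEquivTuple.symm.norm_map t

theorem EuclideanSpace.dotProduct_self_eq_norm_sq {n : Type*} [Fintype n]
    (x : EuclideanSpace ℝ n) : ⇑x ⬝ᵥ ⇑x = ‖x‖ ^ 2 := by
  rw [← real_inner_self_eq_norm_sq, EuclideanSpace.inner_eq_star_dotProduct, star_trivial]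

theorem dotProduct_self_star_quat_mul_quat (r t : EuclideanSpace ℝ (Fin 4)) :
    ⇑(linearIsometryEquivTuple (star (quat t * quat r))) ⬝ᵥ
      ⇑(linearIsometryEquivTuple (star (quat t * quat r))) = (‖t‖ * ‖r‖) ^ 2 := by
  rw [EuclideanSpace.dotProduct_self_eq_norm_sq, LinearIsometryEquiv.norm_map, norm_star,
    norm_mul, norm_quat, norm_quat]

theorem Pq_eq_dotProduct (r s t : EuclideanSpace ℝ (Fin 4)) :
    Pq r s t = ⇑(linearIsometryEquivTuple (star (quat t * quat r))) ⬝ᵥ ⇑s := by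
  simp only [Pq, dotProduct, Fin.sum_univ_four, linearIsometryEquivTuple_apply, re_star, imI_star,
    imJ_star, imK_star, re_mul, imI_mul, imJ_mul, imK_mul]
  simp [quat]
  ring

theorem Mmat_mul_Mmat_mul_Mmat_add_transpose (r s t : EuclideanSpace ℝ (Fin 4)) :
    Mmat r * Mmat s * Mmat t + (Mmat r * Mmat s * Mmat t)ᵀ =
      (2 : ℝ) • symmVecMulVec ⇑(linearIsometryEquivTuple (star (quat t * quat r))) ⇑s := by
  ext i j
  simp only [symmVecMulVec, Matrix.add_apply, Matrix.smul_apply, Matrix.sub_apply, vecMulVec_apply,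
    transpose_apply, scalar_apply, diagonal_apply, dotProduct, Fin.sum_univ_four, mul_apply,
    linearIsometryEquivTuple_apply, re_star, imI_star, imJ_star, imK_star,
    re_mul, imI_mul, imJ_mul, imK_mul]
  fin_cases i <;> fin_cases j <;> simp [quat, Mmat] <;> ring

end Quaternion

theorem roots_X_sq_sub_four_mul_X_add_C_sq (c : ℝ) :
    ((X ^ 2 - C 4) * (X + C c) ^ 2 : ℝ[X]).roots = {2, -2, -c, -c} := by
  have h4 : (X ^ 2 - C 4 : ℝ[X]) = (X - C 2) * (X - C (-2)) := by
    simp only [map_neg, map_ofNat]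
    ring
  have hc : (X + C c : ℝ[X]) = X - C (-c) := by
    rw [map_neg, sub_neg_eq_add]
  rw [h4, hc, roots_mul, roots_mul, roots_pow, roots_X_sub_C, roots_X_sub_C, roots_X_sub_C]
  · rfl
  · exact mul_ne_zero (X_sub_C_ne_zero _) (X_sub_C_ne_zero _)
  · exact mul_ne_zero (mul_ne_zero (X_sub_C_ne_zero _) (X_sub_C_ne_zero _))
      (pow_ne_zero _ (X_sub_C_ne_zero _))

theorem stmt9 (r s t : EuclideanSpace ℝ (Fin 4)) (hr : r ≠ 0) (hs : s ≠ 0) (ht : t ≠ 0) :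
    ((((‖r‖ * ‖s‖ * ‖t‖)⁻¹ • (Mmat r * Mmat s * Mmat t)) +
        ((‖r‖ * ‖s‖ * ‖t‖)⁻¹ • (Mmat r * Mmat s * Mmat t)).transpose).charpoly =
      (X ^ 2 - C 4) * (X + C (2 * (Pq r s t / (‖r‖ * ‖s‖ * ‖t‖)))) ^ 2) ∧
    ((((‖r‖ * ‖s‖ * ‖t‖)⁻¹ • (Mmat r * Mmat s * Mmat t)) +
        ((‖r‖ * ‖s‖ * ‖t‖)⁻¹ • (Mmat r * Mmat s * Mmat t)).transpose).charpoly.roots =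
      {2, -2, -(2 * (Pq r s t / (‖r‖ * ‖s‖ * ‖t‖))),
        -(2 * (Pq r s t / (‖r‖ * ‖s‖ * ‖t‖)))}) := by
  set n := ‖r‖ * ‖s‖ * ‖t‖
  set a := ⇑(Quaternion.linearIsometryEquivTuple (star (quat t * quat r)))
  have hn : n ≠ 0 := by simp [n, hr, hs, ht]
  have hN : n⁻¹ • (Mmat r * Mmat s * Mmat t) + (n⁻¹ • (Mmat r * Mmat s * Mmat t))ᵀ =
      symmVecMulVec ((2 * n⁻¹) • a) ⇑s := by
    rw [Matrix.transpose_smul, ← smul_add, Mmat_mul_Mmat_mul_Mmat_add_transpose,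
      symmVecMulVec_smul_left, smul_smul, mul_comm]
  have hp : (2 * n⁻¹) • a ⬝ᵥ ⇑s = 2 * (Pq r s t / n) := by
    rw [smul_dotProduct, ← Pq_eq_dotProduct, smul_eq_mul]
    ring
  have hq : ((2 * n⁻¹) • a ⬝ᵥ (2 * n⁻¹) • a) * (⇑s ⬝ᵥ ⇑s) = 4 := by
    rw [smul_dotProduct, dotProduct_smul, dotProduct_self_star_quat_mul_quat,
      EuclideanSpace.dotProduct_self_eq_norm_sq]
    simp only [smul_eq_mul]
    field_simp
    ring
  have hchar : (n⁻¹ • (Mmat r * Mmat s * Mmat t) + (n⁻¹ • (Mmat r * Mmat s * Mmat t))ᵀ).charpoly =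
      (X ^ 2 - C 4) * (X + C (2 * (Pq r s t / n))) ^ 2 := by
    rw [hN, charpoly_symmVecMulVec _ _ (by simp), hp, hq, Fintype.card_fin]
    ring
  exact ⟨hchar, by rw [hchar, roots_X_sq_sub_four_mul_X_add_C_sq]⟩
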